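/- arXiv:1410.6081 — 2 statements merged into one kernel-verified Lean document; each statement's English description precedes it below -/
import Mathlib

section
/- A continuous map F : ℕ* → ℕ* is chain transitive if and only if for every infinite, co-infinite set A ⊆ ℕ, F(A*) is not contained in A*. -/
open Filter Set Topology

noncomputable section

/-- `βℕ`: the space of ultrafilters on `ℕ` (the Stone–Čech compactification of `ℕ`). -/
abbrev βN := Ultrafilter ℕ

/-- `ℕ* = βℕ ∖ ℕ`: the free (nonprincipal) ultrafilters, i.e. those containing
every cofinite set. -/
def NStar : Set βN := {p | (p : Filter ℕ) ≤ Filter.cofinite}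

/-- The shift map `σ : βℕ → βℕ`, the pushforward under `n ↦ n + 1`. -/
def shift (p : βN) : βN := p.map (· + 1)

/-- Addition on `βℕ`: `A ∈ p + q ↔ {n | A − n ∈ p} ∈ q`, where `A − n = {m | m + n ∈ A}`. -/
def addU (p q : βN) : βN := q.bind fun n => p.map (· + n)

/-- A right ideal of `(βℕ, +)`: `I + βℕ ⊆ I`. -/
def IsRightIdeal (I : Set βN) : Prop := ∀ p ∈ I, ∀ q : βN, addU p q ∈ I

/-- A minimal right ideal: a nonempty right ideal not properly containing any
other (nonempty) right ideal. -/
def IsMinRightIdeal (I : Set βN) : Prop :=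
  I.Nonempty ∧ IsRightIdeal I ∧
    ∀ J : Set βN, J.Nonempty → IsRightIdeal J → J ⊆ I → J = I

/-- `A* = {p ∈ ℕ* | A ∈ p}`, as a subset of the subspace `ℕ*`. -/
def starSet (A : Set ℕ) : Set ↥NStar := {p | A ∈ (p : βN)}

/-- `F* = ⋂_{A ∈ F} A*` for a (free) filter `F` on `ℕ`. -/
def filterStar (F : Filter ℕ) : Set βN := ⋂ A ∈ F, {p : βN | A ∈ p}

/-- A closed `P`-set of the space `ℕ*`: for every countable collection of open
sets containing `X`, `X` is contained in the interior of the intersection. -/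
def IsPSetSub (X : Set ↥NStar) : Prop :=
  IsClosed X ∧ ∀ 𝒜 : Set (Set ↥NStar), 𝒜.Countable →
    (∀ U ∈ 𝒜, IsOpen U ∧ X ⊆ U) → X ⊆ interior (⋂₀ 𝒜)

/-- A subset of `βℕ` which lies in `ℕ*` and is a closed `P`-set of `ℕ*`. -/
def IsPSetIn (X : Set βN) : Prop :=
  X ⊆ NStar ∧ IsPSetSub (Subtype.val ⁻¹' X)

/-- `A ⊆ ℕ` is thick if it contains arbitrarily long intervals. -/
def Thick (A : Set ℕ) : Prop := ∀ k : ℕ, ∃ n : ℕ, Set.Icc n (n + k) ⊆ A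

/-- `A ⊆* B`: `A ∖ B` is finite. -/
def almostSub (A B : Set ℕ) : Prop := (A \ B).Finite

/-- The tower number `𝔱`: the least cardinality of a `⊆*`-chain of infinite subsets
of `ℕ` with no infinite pseudo-intersection. -/
def towerNum : Cardinal :=
  sInf {c : Cardinal | ∃ C : Set (Set ℕ), c = Cardinal.mk ↥C ∧ (∀ A ∈ C, A.Infinite) ∧
    IsChain almostSub C ∧ ¬∃ B : Set ℕ, B.Infinite ∧ ∀ A ∈ C, almostSub B A}

/-- `𝔱_Θ`: the least cardinality of a `⊆*`-chain of thick subsets of `ℕ` with no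
thick `⊆*`-lower bound. -/
def towerNumTheta : Cardinal :=
  sInf {c : Cardinal | ∃ C : Set (Set ℕ), c = Cardinal.mk ↥C ∧ (∀ A ∈ C, Thick A) ∧
    IsChain almostSub C ∧ ¬∃ B : Set ℕ, Thick B ∧ ∀ A ∈ C, almostSub B A}

/-- The pseudo-intersection number `𝔭`: the least cardinality of a filter base of
infinite subsets of `ℕ` (all finite intersections infinite) with no infinite
pseudo-intersection. -/
def pNum : Cardinal :=
  sInf {c : Cardinal | ∃ C : Set (Set ℕ), c = Cardinal.mk ↥C ∧
    (∀ S : Finset (Set ℕ), ↑S ⊆ C → (⋂ A ∈ S, A : Set ℕ).Infinite) ∧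
    ¬∃ B : Set ℕ, B.Infinite ∧ ∀ A ∈ C, almostSub B A}

/-- Chain transitivity for a dynamical system on a topological space, via open
covers: for every open cover `𝒰` and all `x, y` there is a `𝒰`-chain from `x` to `y`. -/
def ChainTransitive {X : Type*} [TopologicalSpace X] (f : X → X) : Prop :=
  ∀ 𝒰 : Set (Set X), (∀ U ∈ 𝒰, IsOpen U) → ⋃₀ 𝒰 = Set.univ →
    ∀ x y : X, ∃ (n : ℕ) (c : ℕ → X), c 0 = x ∧ c n = y ∧
      ∀ i < n, ∃ U ∈ 𝒰, f (c i) ∈ U ∧ c (i + 1) ∈ U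

lemma shift_mem_NStar {p : βN} (hp : p ∈ NStar) : shift p ∈ NStar := by
  have h1 : Filter.Tendsto (· + 1) Filter.cofinite Filter.cofinite :=
    Function.Injective.tendsto_cofinite (add_left_injective 1)
  simp only [NStar, Set.mem_setOf_eq, shift, Ultrafilter.coe_map] at *
  exact (Filter.map_mono hp).trans h1

/-- The shift map restricted to `ℕ*`. -/
def shiftStar (p : ↥NStar) : ↥NStar := ⟨shift p.1, shift_mem_NStar p.2⟩

lemma isClosed_NStar : IsClosed NStar := by
  have : NStar = ⋂ s ∈ {s : Set ℕ | sᶜ.Finite}, {p : βN | s ∈ p} := by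
    ext p
    simp only [NStar, Set.mem_setOf_eq, Set.mem_iInter]
    constructor
    · intro h s hs
      exact h ((Filter.mem_cofinite).mpr hs)
    · intro h s hs
      exact h s ((Filter.mem_cofinite).mp hs)
  rw [this]
  exact isClosed_biInter fun s _ => ultrafilter_isClosed_basic s

instance : CompactSpace ↥NStar :=
  isCompact_iff_compactSpace.mp isClosed_NStar.isCompact

lemma isOpen_starSet (A : Set ℕ) : IsOpen (starSet A) :=
  (ultrafilter_isOpen_basic A).preimage continuous_subtype_val

lemma infinite_of_mem_star {p : ↥NStar} {A : Set ℕ} (hA : A ∈ (p : βN)) : A.Infinite := by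
  by_contra hfin
  rw [Set.not_infinite] at hfin
  have hc : Aᶜ ∈ (p : βN) := p.2 ((Filter.mem_cofinite).mpr (by simpa using hfin))
  exact (Ultrafilter.compl_notMem_iff.mpr hA) hc

lemma exists_mem_starSet {A : Set ℕ} (hA : A.Infinite) : ∃ p : ↥NStar, A ∈ (p : βN) := by
  have : (Filter.cofinite ⊓ 𝓟 A).NeBot := hA.cofinite_inf_principal_neBot
  obtain ⟨u, hu⟩ := Filter.exists_ultrafilter_le (Filter.cofinite ⊓ 𝓟 A)
  exact ⟨⟨u, hu.trans inf_le_left⟩, Filter.le_principal_iff.mp (hu.trans inf_le_right)⟩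

/-- The indices reachable from `x` through a family of sets `V`. -/
inductive ReachIdx {ι : Type*} (V : ι → Set ↥NStar) (F : ↥NStar → ↥NStar) (x : ↥NStar) :
    ι → Prop
  | base (i : ι) : F x ∈ V i → ReachIdx V F x i
  | step (i j : ι) (z : ↥NStar) : ReachIdx V F x i → z ∈ V i → F z ∈ V j → ReachIdx V F x j

/-- A continuous map `F : ℕ* → ℕ*` is chain transitive iff for
every infinite, co-infinite `A ⊆ ℕ`, `F(A*) ⊄ A*`. -/
theorem stmt15 (F : ↥NStar → ↥NStar) (hF : Continuous F) :
    ChainTransitive F ↔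
      ∀ A : Set ℕ, A.Infinite → Aᶜ.Infinite → ¬ (F '' starSet A ⊆ starSet A) := by
  constructor
  · -- chain transitive → no invariant proper clopen `A*`
    intro hCT A hA hAc hsub
    obtain ⟨x, hx⟩ := exists_mem_starSet hA
    obtain ⟨y, hy⟩ := exists_mem_starSet hAc
    set 𝒰 : Set (Set ↥NStar) := {starSet A, starSet Aᶜ} with h𝒰
    have hopen : ∀ U ∈ 𝒰, IsOpen U := by
      rintro U (rfl | rfl) <;> exact isOpen_starSet _
    have hcover : ⋃₀ 𝒰 = Set.univ := by
      apply Set.eq_univ_of_forall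
      intro p
      rcases (p : βN).mem_or_compl_mem A with h | h
      · exact ⟨starSet A, by simp [h𝒰], h⟩
      · exact ⟨starSet Aᶜ, by simp [h𝒰], h⟩
    obtain ⟨n, c, hc0, hcn, hlink⟩ := hCT 𝒰 hopen hcover x y
    have key : ∀ i ≤ n, A ∈ (c i : βN) := by
      intro i hi
      induction i with
      | zero => rw [hc0]; exact hx
      | succ i ih =>
        have hiA : A ∈ (c i : βN) := ih (le_of_lt (Nat.lt_of_succ_le hi))
        obtain ⟨U, hU, hFU, hcU⟩ := hlink i (Nat.lt_of_succ_le hi)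
        have hFA : A ∈ (F (c i) : βN) := hsub ⟨c i, hiA, rfl⟩
        rcases hU with rfl | rfl
        · exact hcU
        · exact absurd hFU (Ultrafilter.compl_notMem_iff.mpr hFA)
    have : A ∈ (y : βN) := by
      have := key n le_rfl
      rwa [hcn] at this
    exact (Ultrafilter.compl_notMem_iff.mpr this) hy
  · -- no invariant proper clopen `A*` → chain transitive
    intro h 𝒰 hopen hcover x y
    by_contra hno
    push_neg at hno
    -- every point has a basic clopen neighborhood subordinate to `𝒰`
    have hbasic : ∀ p : ↥NStar, ∃ s : Set ℕ, p ∈ starSet s ∧ ∃ U ∈ 𝒰, starSet s ⊆ U := by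
      intro p
      have hp : p ∈ ⋃₀ 𝒰 := by rw [hcover]; trivial
      obtain ⟨U, hU, hpU⟩ := hp
      obtain ⟨O, hO, rfl⟩ := isOpen_induced_iff.mp (hopen U hU)
      obtain ⟨B, ⟨s, rfl⟩, hpB, hBO⟩ :=
        ultrafilterBasis_is_basis.exists_subset_of_mem_open (by exact hpU) hO
      exact ⟨s, hpB, Subtype.val ⁻¹' O, hU, fun q hq => hBO hq⟩
    choose s hs hsub using hbasic
    choose Usub hUsub hVsub using hsub
    -- extract a finite subcover
    have hcov2 : (Set.univ : Set ↥NStar) ⊆ ⋃ p : ↥NStar, starSet (s p) :=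
      fun q _ => Set.mem_iUnion.mpr ⟨q, hs q⟩
    obtain ⟨t, ht⟩ := isCompact_univ.elim_finite_subcover
      (fun p : ↥NStar => starSet (s p)) (fun p => isOpen_starSet _) hcov2
    -- index type: elements of the finite subcover
    let ι := {p : ↥NStar // p ∈ t}
    let V : ι → Set ↥NStar := fun i => starSet (s i.1)
    have hVcov : ∀ q : ↥NStar, ∃ i : ι, q ∈ V i := by
      intro q
      have := ht (Set.mem_univ q)
      simp only [Set.mem_iUnion] at this
      obtain ⟨p, hpt, hq⟩ := this
      exact ⟨⟨p, hpt⟩, hq⟩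
    set Reach : ι → Prop := ReachIdx V F x with hReach
    set A : Set ℕ := ⋃ i ∈ {i : ι | Reach i}, s i.1 with hAdef
    -- `starSet A` is the union of the reachable cells
    have hstar : ∀ q : ↥NStar, A ∈ (q : βN) ↔ ∃ i : ι, Reach i ∧ q ∈ V i := by
      intro q
      constructor
      · intro hq
        rw [hAdef] at hq
        have hfin : ({i : ι | Reach i}).Finite := Set.toFinite _
        obtain ⟨i, hi, hqi⟩ := (Ultrafilter.finite_biUnion_mem_iff hfin).mp hq
        exact ⟨i, hi, hqi⟩
      · rintro ⟨i, hi, hqi⟩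
        refine Filter.mem_of_superset hqi ?_
        rw [hAdef]
        exact Set.subset_biUnion_of_mem (u := fun i : ι => s i.1) (show i ∈ {i : ι | Reach i} from hi)
    -- `F x ∈ A*`
    have hFx : A ∈ (F x : βN) := by
      obtain ⟨i, hi⟩ := hVcov (F x)
      exact (hstar (F x)).mpr ⟨i, ReachIdx.base i hi, hi⟩
    -- invariance: `F(A*) ⊆ A*`
    have hinv : ∀ q : ↥NStar, A ∈ (q : βN) → A ∈ (F q : βN) := by
      intro q hq
      obtain ⟨i, hi, hqi⟩ := (hstar q).mp hq
      obtain ⟨j, hj⟩ := hVcov (F q)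
      exact (hstar (F q)).mpr ⟨j, ReachIdx.step i j q hi hqi hj, hj⟩
    -- every point of a reachable cell is chain-reachable from `x`
    have hchain : ∀ i : ι, Reach i → ∀ w ∈ V i,
        ∃ (n : ℕ) (c : ℕ → ↥NStar), c 0 = x ∧ c n = w ∧
          ∀ m < n, ∃ U ∈ 𝒰, F (c m) ∈ U ∧ c (m + 1) ∈ U := by
      intro i hi
      induction hi with
      | base i hFxi =>
        intro w hw
        refine ⟨1, fun m => if m = 0 then x else w, by simp, by simp, ?_⟩
        intro m hm
        interval_cases m
        refine ⟨Usub i.1, hUsub i.1, ?_, ?_⟩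
        · simpa using hVsub i.1 hFxi
        · simpa using hVsub i.1 hw
      | step i j z hi hzi hFzj ih =>
        intro w hw
        obtain ⟨n, c, hc0, hcn, hlink⟩ := ih z hzi
        refine ⟨n + 1, fun m => if m ≤ n then c m else w, by simp [hc0], by simp, ?_⟩
        intro m hm
        rcases Nat.lt_or_ge m n with hmn | hmn
        · obtain ⟨U, hU, h1, h2⟩ := hlink m hmn
          refine ⟨U, hU, ?_, ?_⟩
          · simpa [Nat.le_of_lt hmn] using h1
          · simpa [Nat.succ_le_of_lt hmn] using h2
        · have hmn' : m = n := Nat.le_antisymm (Nat.lt_succ_iff.mp hm) hmn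
          subst hmn'
          refine ⟨Usub j.1, hUsub j.1, ?_, ?_⟩
          · have : F (c m) ∈ V j := by rw [hcn]; exact hFzj
            simpa using hVsub j.1 this
          · simpa using hVsub j.1 hw
    -- `y ∉ A*`
    have hy : A ∉ (y : βN) := by
      intro hyA
      obtain ⟨i, hi, hyi⟩ := (hstar y).mp hyA
      obtain ⟨n, c, hc0, hcn, hlink⟩ := hchain i hi y hyi
      obtain ⟨m, hm, hbad⟩ := hno n c hc0 hcn
      obtain ⟨U, hU𝒰, h1, h2⟩ := hlink m hm
      exact hbad U hU𝒰 h1 h2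
    -- `A` is infinite and co-infinite, and `A*` is `F`-invariant: contradiction
    have hAinf : A.Infinite := infinite_of_mem_star hFx
    have hAcinf : Aᶜ.Infinite :=
      infinite_of_mem_star (p := y) (Ultrafilter.compl_mem_iff_notMem.mpr hy)
    refine h A hAinf hAcinf ?_
    rintro _ ⟨q, hq, rfl⟩
    exact hinv q hq

end
end

section
/- The shift map σ restricted to ℕ* is chain transitive. -/
open Filter Set Topology

noncomputable section

lemma mem_NStar_infinite {p : βN} (hp : p ∈ NStar) {S : Set ℕ} (hS : S ∈ p) :
    S.Infinite := by
  by_contra hfin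
  rw [Set.not_infinite] at hfin
  have h1 : Sᶜ ∈ p := hp (by simpa [Filter.mem_cofinite] using hfin)
  exact (Ultrafilter.compl_notMem_iff.mpr hS) h1

lemma exists_free_of_infinite {S : Set ℕ} (hS : S.Infinite) :
    ∃ p : βN, p ∈ NStar ∧ S ∈ p := by
  have hne : (Filter.cofinite ⊓ Filter.principal S).NeBot := by
    rw [Filter.inf_principal_neBot_iff]
    intro V hV
    have hVc : Vᶜ.Finite := Filter.mem_cofinite.mp hV
    obtain ⟨n, hn⟩ := (hS.diff hVc).nonempty
    exact ⟨n, not_not.mp hn.2, hn.1⟩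
  obtain ⟨p, hp⟩ := Filter.exists_ultrafilter_le (Filter.cofinite ⊓ Filter.principal S)
  refine ⟨p, hp.trans inf_le_left, ?_⟩
  exact Filter.le_principal_iff.mp (hp.trans inf_le_right)

/-- The shift map on `ℕ*` is chain transitive. -/
theorem stmt16 : ChainTransitive shiftStar := by
  classical
  intro 𝒰 hopen hcov x y
  -- Step 1: basic open sets inside cover members
  have step1 : ∀ p : ↥NStar, ∃ (A : Set ℕ) (U : Set ↥NStar),
      U ∈ 𝒰 ∧ A ∈ (p : βN) ∧ starSet A ⊆ U := by
    intro p
    have hpU : ∃ U ∈ 𝒰, p ∈ U := by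
      have hp : p ∈ ⋃₀ 𝒰 := by rw [hcov]; trivial
      simpa [Set.mem_sUnion] using hp
    obtain ⟨U, hU, hpU⟩ := hpU
    obtain ⟨V, hVopen, hUV⟩ := isOpen_induced_iff.mp (hopen U hU)
    have hpV : (p : βN) ∈ V := by rw [← hUV] at hpU; exact hpU
    obtain ⟨tb, htb, hpt, htV⟩ :=
      ultrafilterBasis_is_basis.exists_subset_of_mem_open hpV hVopen
    obtain ⟨A, rfl⟩ := htb
    refine ⟨A, U, hU, hpt, fun q hq => ?_⟩
    rw [← hUV]
    exact htV hq
  choose A U hU hA hsub using step1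
  -- Step 2: compactness of NStar in βN
  have hNclosed : IsClosed NStar := by
    have hEq : NStar = ⋂ S ∈ {S : Set ℕ | Sᶜ.Finite}, {p : βN | S ∈ p} := by
      ext p
      simp only [NStar, Set.mem_setOf_eq, Set.mem_iInter, Filter.le_def]
      constructor
      · intro h S hS
        exact h S (Filter.mem_cofinite.mpr hS)
      · intro h S hS
        exact h S (Filter.mem_cofinite.mp hS)
    rw [hEq]
    exact isClosed_biInter fun S _ => ultrafilter_isClosed_basic S
  have hcpt : IsCompact NStar := hNclosed.isCompact
  have hsubcov : NStar ⊆ ⋃ p : ↥NStar, {u : βN | A p ∈ u} := by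
    intro q hq
    exact Set.mem_iUnion.mpr ⟨⟨q, hq⟩, hA ⟨q, hq⟩⟩
  obtain ⟨t, ht⟩ := hcpt.elim_finite_subcover (fun p : ↥NStar => {u : βN | A p ∈ u})
    (fun p => ultrafilter_isOpen_basic _) hsubcov
  -- a designated element of t
  have hxt : ∃ p ∈ t, A p ∈ (x : βN) := by
    have hx := ht x.2
    simpa using hx
  obtain ⟨p₀, hp₀t, _⟩ := hxt
  -- remainder
  set R : Set ℕ := (⋃ p ∈ t, A p)ᶜ with hRdef
  have hRfin : R.Finite := by
    by_contra hRinf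
    obtain ⟨q, hqN, hqR⟩ := exists_free_of_infinite hRinf
    have hq2 := ht hqN
    simp only [Set.mem_iUnion] at hq2
    obtain ⟨p, hpt, hpq⟩ := hq2
    have hmem : A p ∩ R ∈ q := Filter.inter_mem hpq hqR
    have hemp : A p ∩ R = (∅ : Set ℕ) := by
      ext n
      simp only [hRdef, Set.mem_inter_iff, Set.mem_compl_iff, Set.mem_iUnion,
        Set.mem_empty_iff_false, iff_false, not_and, not_not]
      intro hn
      exact ⟨p, hpt, hn⟩
    rw [hemp] at hmem
    exact Filter.empty_notMem (q : Filter ℕ) hmem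
  -- the finite index type of colors
  let ι : Type _ := ↥(↑t : Set ↥NStar)
  have hp₀t' : p₀ ∈ (↑t : Set ↥NStar) := hp₀t
  let istar : ι := ⟨p₀, hp₀t'⟩
  -- adjusted cells covering all of ℕ
  let A' : ι → Set ℕ := fun i => A i.1 ∪ (if i = istar then R else ∅)
  have hcov' : ∀ n, ∃ i : ι, n ∈ A' i := by
    intro n
    by_cases hn : n ∈ R
    · exact ⟨istar, Or.inr (by simp [hn])⟩
    · have hn2 : n ∈ ⋃ p ∈ t, A p := by
        by_contra h
        exact hn h
      simp only [Set.mem_iUnion] at hn2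
      obtain ⟨p, hpt, h⟩ := hn2
      exact ⟨⟨p, hpt⟩, Or.inl h⟩
  have hsub' : ∀ (i : ι) (q : βN), q ∈ NStar → A' i ∈ q → A i.1 ∈ q := by
    intro i q hqN hq
    rcases Ultrafilter.union_mem_iff.mp hq with h | h
    · exact h
    · exfalso
      have hfin : (if i = istar then R else (∅ : Set ℕ)).Finite := by
        split
        · exact hRfin
        · exact Set.finite_empty
      exact (mem_NStar_infinite hqN h) hfin
  -- coloring
  let c : ℕ → ι := fun n => (hcov' n).choose
  have hc : ∀ n, n ∈ A' (c n) := fun n => (hcov' n).choose_spec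
  let B : ι → Set ℕ := fun i => c ⁻¹' {i}
  have hBmem : ∀ q : βN, ∃ i : ι, B i ∈ q := by
    intro q
    have huniv : ⋃ i ∈ (Set.univ : Set ι), B i ∈ q := by
      have h1 : ⋃ i ∈ (Set.univ : Set ι), B i = Set.univ := by
        ext n
        simp only [Set.mem_iUnion, Set.mem_univ, iff_true, exists_prop]
        exact ⟨c n, trivial, rfl⟩
      rw [h1]
      exact Filter.univ_mem
    obtain ⟨i, _, hi⟩ := (Ultrafilter.finite_biUnion_mem_iff Set.finite_univ).mp huniv
    exact ⟨i, hi⟩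
  have hBA : ∀ (i : ι) (q : βN), q ∈ NStar → B i ∈ q → A i.1 ∈ q := by
    intro i q hqN h
    refine hsub' i q hqN (Filter.mem_of_superset h ?_)
    intro n hn
    have hn' : c n = i := hn
    rw [← hn']
    exact hc n
  -- one chain step
  have stepU : ∀ (i : ι) (p q : ↥NStar), B i ∈ shift (p : βN) → B i ∈ (q : βN) →
      ∃ V ∈ 𝒰, shiftStar p ∈ V ∧ q ∈ V := by
    intro i p q hp hq
    refine ⟨U i.1, hU i.1, ?_, ?_⟩
    · exact hsub i.1 (hBA i (shift p) (shift_mem_NStar p.2) hp)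
    · exact hsub i.1 (hBA i q q.2 hq)
  -- the edge relation
  let E : ι → ι → Prop := fun i j => {n | c n = i ∧ c (n + 1) = j}.Infinite
  have hBadfin : {n | ¬ E (c n) (c (n + 1))}.Finite := by
    have hsub2 : {n | ¬ E (c n) (c (n + 1))} ⊆
        ⋃ (i : ι) (j : ι) (_ : ¬ E i j), {n | c n = i ∧ c (n + 1) = j} := by
      intro n hn
      simp only [Set.mem_iUnion]
      exact ⟨c n, c (n + 1), hn, rfl, rfl⟩
    refine Set.Finite.subset ?_ hsub2
    refine Set.finite_iUnion fun i => Set.finite_iUnion fun j => Set.finite_iUnion fun hnE => ?_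
    exact Set.not_infinite.mp hnE
  obtain ⟨N, hN⟩ := hBadfin.bddAbove
  have hE : ∀ n, N < n → E (c n) (c (n + 1)) := by
    intro n hn
    by_contra h
    exact absurd (hN h) (not_le.mpr hn)
  have hwalk : ∀ (d n : ℕ), N < n → Relation.ReflTransGen E (c n) (c (n + d)) := by
    intro d
    induction d with
    | zero => intro n _; exact Relation.ReflTransGen.refl
    | succ d ih =>
        intro n hn
        exact (ih n hn).tail (hE (n + d) (lt_of_lt_of_le hn (Nat.le_add_right n d)))
  -- start and end colors
  obtain ⟨i₀, hi₀⟩ := hBmem (shift (x : βN))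
  obtain ⟨j₀, hj₀⟩ := hBmem (y : βN)
  have hBi₀inf : (B i₀).Infinite := mem_NStar_infinite (shift_mem_NStar x.2) hi₀
  have hBj₀inf : (B j₀).Infinite := mem_NStar_infinite y.2 hj₀
  obtain ⟨n₀, hn₀B, hn₀N⟩ := hBi₀inf.exists_gt N
  obtain ⟨m₀, hm₀B, hm₀n⟩ := hBj₀inf.exists_gt n₀
  have hreach : Relation.ReflTransGen E i₀ j₀ := by
    have hw := hwalk (m₀ - n₀) n₀ hn₀N
    rw [Nat.add_sub_cancel' (le_of_lt hm₀n)] at hw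
    have h1 : c n₀ = i₀ := hn₀B
    have h2 : c m₀ = j₀ := hm₀B
    rwa [h1, h2] at hw
  -- main chain construction by induction on reachability
  have key : ∀ j, Relation.ReflTransGen E i₀ j → ∀ q : ↥NStar, B j ∈ (q : βN) →
      ∃ (n : ℕ) (ch : ℕ → ↥NStar), ch 0 = x ∧ ch n = q ∧
        ∀ s < n, ∃ V ∈ 𝒰, shiftStar (ch s) ∈ V ∧ ch (s + 1) ∈ V := by
    intro j hj
    induction hj with
    | refl =>
        intro q hq
        refine ⟨1, fun s => if s = 0 then x else q, by simp, by simp, ?_⟩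
        intro s hs
        have hs0 : s = 0 := by omega
        subst hs0
        obtain ⟨V, hV, h1, h2⟩ := stepU i₀ x q hi₀ hq
        exact ⟨V, hV, by simpa using h1, by simpa using h2⟩
    | @tail b j' hab hbj ih =>
        intro q hq
        have hSinf : {n | c n = b ∧ c (n + 1) = j'}.Infinite := hbj
        obtain ⟨r, hrN, hrS⟩ := exists_free_of_infinite hSinf
        have hrB : B b ∈ r := Filter.mem_of_superset hrS fun n hn => hn.1
        obtain ⟨m, ch, hch0, hchm, hstep⟩ := ih ⟨r, hrN⟩ hrB
        refine ⟨m + 1, fun s => if s ≤ m then ch s else q, by simp [hch0], by simp, ?_⟩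
        intro s hs
        by_cases hsm : s < m
        · obtain ⟨V, hV, ha, hb⟩ := hstep s hsm
          refine ⟨V, hV, ?_, ?_⟩
          · simpa [le_of_lt hsm] using ha
          · have : s + 1 ≤ m := hsm
            simpa [this] using hb
        · have hse : s = m := by omega
          subst hse
          have h1 : B j' ∈ shift (r : βN) := by
            have hpre : (fun n => n + 1) ⁻¹' B j' ∈ r :=
              Filter.mem_of_superset hrS fun n hn => hn.2
            exact Ultrafilter.mem_map.mpr hpre
          obtain ⟨V, hV, ha, hb⟩ := stepU j' ⟨r, hrN⟩ q h1 hq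
          refine ⟨V, hV, ?_, ?_⟩
          · have hce : ch s = ⟨r, hrN⟩ := hchm
            simp only [le_refl, if_pos]
            rw [hce]
            exact ha
          · have : ¬ (s + 1 ≤ s) := by omega
            simpa [this] using hb
  obtain ⟨n, ch, h0, hn, hs⟩ := key j₀ hreach y hj₀
  exact ⟨n, ch, h0, hn, hs⟩

end
end
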